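/- Let k ≠ ℓ both lie in I ∈ 𝓘, and let u^{k,I} and u^{ℓ,I} be the unique solutions of the restricted Darboux systems k and ℓ (obtained from a given C² Darboux system by restriction to {x_k = 0} and {x_ℓ = 0} respectively, with data induced from the common original data ū^I). Then u^{k,I}(x'^k)|_{x_ℓ = 0} = u^{ℓ,I}(x'^ℓ)|_{x_k = 0} on a neighborhood of the origin in ℝ^{n-2}. -/
import Mathlib


open Set Function

/-- The substitution used in forming the restricted "system ℓ". -/
noncomputable def darbouxSubst (n : ℕ) (κ : Type) (P : κ → Finset (Fin n))
    (ubar : κ → (Fin n → ℝ) → ℝ) (ℓ : Fin n)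
    (x : Fin n → ℝ) (V : κ → ℝ) : κ → ℝ :=
  fun m => if ℓ ∈ P m ∧ P m ≠ {ℓ} then V m else ubar m (Function.update x ℓ 0)

/-- The right-hand sides of the restricted "system ℓ". -/
noncomputable def darbouxRestrictRHS (n : ℕ) (κ : Type) (P : κ → Finset (Fin n))
    (F : κ → Fin n → (Fin n → ℝ) → (κ → ℝ) → ℝ)
    (ubar : κ → (Fin n → ℝ) → ℝ) (ℓ : Fin n)
    (k : κ) (i : Fin n) (x : Fin n → ℝ) (V : κ → ℝ) : ℝ :=
  F k i (Function.update x ℓ 0) (darbouxSubst n κ P ubar ℓ x V)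

/-- Solutions of the restricted "system ℓ", encoded as functions of all `n` variables
that do not depend on `x_ℓ`: they are C², satisfy the restricted equations in the
directions `i ∈ I∖ℓ`, and attain the induced data. -/
def IsRestrictedDarbouxSol (n : ℕ) (κ : Type) (P : κ → Finset (Fin n))
    (F : κ → Fin n → (Fin n → ℝ) → (κ → ℝ) → ℝ)
    (ubar : κ → (Fin n → ℝ) → ℝ)
    (s : Set ((Fin n → ℝ) × (κ → ℝ))) (ℓ : Fin n) (ε : ℝ)
    (v : κ → (Fin n → ℝ) → ℝ) : Prop :=
  (∀ m, ℓ ∈ P m → P m ≠ {ℓ} → ∀ x t, v m (Function.update x ℓ t) = v m x) ∧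
  (∀ m, ℓ ∈ P m → P m ≠ {ℓ} → ContDiffOn ℝ 2 (v m) (Metric.ball 0 ε)) ∧
  ∀ x ∈ Metric.ball (0 : Fin n → ℝ) ε,
    (Function.update x ℓ 0, darbouxSubst n κ P ubar ℓ x (fun m => v m x)) ∈ s ∧
    (∀ m, ℓ ∈ P m → P m ≠ {ℓ} → ∀ i ∈ P m, i ≠ ℓ →
      HasDerivAt (fun t => v m (Function.update x i t))
        (darbouxRestrictRHS n κ P F ubar ℓ m i x (fun m' => v m' x)) (x i)) ∧
    (∀ m, ℓ ∈ P m → P m ≠ {ℓ} → (∀ i ∈ P m, i ≠ ℓ → x i = 0) →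
      v m x = ubar m (Function.update x ℓ 0))


/-- Auxiliary to the compatibility proof: the unknowns whose index set contains both
`k` and `ℓ`, with the remaining unknowns frozen to the data `ubar`. -/
noncomputable def darbouxUAux (n : ℕ) (κ : Type) (P : κ → Finset (Fin n))
    (ubar : κ → (Fin n → ℝ) → ℝ) (k ℓ : Fin n)
    (v : κ → (Fin n → ℝ) → ℝ) (x : Fin n → ℝ) : κ → ℝ :=
  fun m => if k ∈ P m ∧ ℓ ∈ P m then v m x else ubar m x

/-- Claim 6.2 in the proof of Darboux's theorem: if `k ≠ ℓ` both lie in `P m`, then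
the solutions of the restricted systems `k` and `ℓ` (obtained from a given C² Darboux
system by restriction to `{x_k = 0}` and `{x_ℓ = 0}`, with data induced from the
common original data) agree, on the subspace `{x_k = x_ℓ = 0}`, near the origin. -/
theorem darboux_restricted_solutions_compatible (n : ℕ) (κ : Type) [Fintype κ]
    (P : κ → Finset (Fin n)) (hP : ∀ k, (P k).Nonempty)
    (F : κ → Fin n → (Fin n → ℝ) → (κ → ℝ) → ℝ)
    (ubar : κ → (Fin n → ℝ) → ℝ)
    (s : Set ((Fin n → ℝ) × (κ → ℝ))) (hs : IsOpen s)
    (hbase : ((0 : Fin n → ℝ), fun k => ubar k 0) ∈ s)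
    (s0 : Set (Fin n → ℝ)) (hs0 : IsOpen s0) (h0s0 : (0 : Fin n → ℝ) ∈ s0)
    (hubar : ∀ k, ContDiffOn ℝ 2 (ubar k) s0)
    (hFsm : ∀ k, ∀ i ∈ P k,
      ContDiffOn ℝ 2 (fun p : (Fin n → ℝ) × (κ → ℝ) => F k i p.1 p.2) s)
    (hdep : ∀ k, ∀ i ∈ P k, ∀ x U V,
      (∀ m, P k \ {i} ⊆ P m → U m = V m) → F k i x U = F k i x V)
    (hint : ∀ k, ∀ i ∈ P k, ∀ j ∈ P k, i ≠ j → ∀ p ∈ s,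
      fderiv ℝ (fun q : (Fin n → ℝ) × (κ → ℝ) => F k i q.1 q.2) p
        ((Pi.single j 1 : Fin n → ℝ), fun m => F m j p.1 p.2)
      = fderiv ℝ (fun q : (Fin n → ℝ) × (κ → ℝ) => F k j q.1 q.2) p
        ((Pi.single i 1 : Fin n → ℝ), fun m => F m i p.1 p.2))
    (k ℓ : Fin n) (hkℓ : k ≠ ℓ)
    (εk εℓ : ℝ) (hεk : 0 < εk) (hεℓ : 0 < εℓ)
    (vk vℓ : κ → (Fin n → ℝ) → ℝ)
    (hvk : IsRestrictedDarbouxSol n κ P F ubar s k εk vk)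
    (hvℓ : IsRestrictedDarbouxSol n κ P F ubar s ℓ εℓ vℓ)
    (m : κ) (hkm : k ∈ P m) (hℓm : ℓ ∈ P m) :
    ∃ ε > 0, ∀ x ∈ Metric.ball (0 : Fin n → ℝ) ε,
      x k = 0 → x ℓ = 0 → vk m x = vℓ m x := by
  classical
  set Uk : (Fin n → ℝ) → κ → ℝ := darbouxUAux n κ P ubar k ℓ vk with hUkdef
  set Ul : (Fin n → ℝ) → κ → ℝ := darbouxUAux n κ P ubar k ℓ vℓ with hUldef
  have hupd : ∀ (x : Fin n → ℝ) (j : Fin n), x j = 0 → Function.update x j 0 = x := by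
    intro x j h
    conv_rhs => rw [← Function.update_eq_self j x]
    rw [h]
  have hPne : ∀ m', k ∈ P m' → ℓ ∈ P m' → P m' ≠ {k} ∧ P m' ≠ {ℓ} := by
    intro m' hk' hl'
    constructor
    · intro h
      rw [h, Finset.mem_singleton] at hl'
      exact hkℓ hl'.symm
    · intro h
      rw [h, Finset.mem_singleton] at hk'
      exact hkℓ hk'
  -- values at the origin
  have hvk0 : ∀ m', k ∈ P m' → ℓ ∈ P m' → vk m' 0 = ubar m' 0 := by
    intro m' hk' hl'
    have h := (hvk.2.2 0 (Metric.mem_ball_self hεk)).2.2 m' hk' (hPne m' hk' hl').1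
      (fun i _ _ => rfl)
    rw [h, hupd 0 k rfl]
  have hvl0 : ∀ m', k ∈ P m' → ℓ ∈ P m' → vℓ m' 0 = ubar m' 0 := by
    intro m' hk' hl'
    have h := (hvℓ.2.2 0 (Metric.mem_ball_self hεℓ)).2.2 m' hl' (hPne m' hk' hl').2
      (fun i _ _ => rfl)
    rw [h, hupd 0 ℓ rfl]
  have hUk0 : Uk 0 = fun m'' => ubar m'' 0 := by
    funext m''
    simp only [hUkdef, darbouxUAux]
    by_cases h : k ∈ P m'' ∧ ℓ ∈ P m''
    · rw [if_pos h]; exact hvk0 m'' h.1 h.2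
    · rw [if_neg h]
  have hUl0 : Ul 0 = fun m'' => ubar m'' 0 := by
    funext m''
    simp only [hUldef, darbouxUAux]
    by_cases h : k ∈ P m'' ∧ ℓ ∈ P m''
    · rw [if_pos h]; exact hvl0 m'' h.1 h.2
    · rw [if_neg h]
  -- continuity at the origin
  have hUkc : ContinuousAt Uk 0 := by
    rw [continuousAt_pi]
    intro m''
    simp only [hUkdef, darbouxUAux]
    by_cases h : k ∈ P m'' ∧ ℓ ∈ P m''
    · simp only [if_pos h]
      exact ((hvk.2.1 m'' h.1 (hPne m'' h.1 h.2).1).continuousOn).continuousAt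
        (Metric.isOpen_ball.mem_nhds (Metric.mem_ball_self hεk))
    · simp only [if_neg h]
      exact ((hubar m'').continuousOn).continuousAt (hs0.mem_nhds h0s0)
  have hUlc : ContinuousAt Ul 0 := by
    rw [continuousAt_pi]
    intro m''
    simp only [hUldef, darbouxUAux]
    by_cases h : k ∈ P m'' ∧ ℓ ∈ P m''
    · simp only [if_pos h]
      exact ((hvℓ.2.1 m'' h.2 (hPne m'' h.1 h.2).2).continuousOn).continuousAt
        (Metric.isOpen_ball.mem_nhds (Metric.mem_ball_self hεℓ))
    · simp only [if_neg h]
      exact ((hubar m'').continuousOn).continuousAt (hs0.mem_nhds h0s0)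
  -- local Lipschitz constants for the right-hand sides
  have hLipEx : ∀ p : κ × Fin n, ∃ (K : NNReal) (t : Set ((Fin n → ℝ) × (κ → ℝ))),
      t ∈ nhds ((0 : Fin n → ℝ), fun m'' => ubar m'' 0) ∧
      (p.2 ∈ P p.1 →
        LipschitzOnWith K (fun q : (Fin n → ℝ) × (κ → ℝ) => F p.1 p.2 q.1 q.2) t) := by
    intro p
    by_cases h : p.2 ∈ P p.1
    · obtain ⟨K, t, ht, hK⟩ :=
        (((hFsm p.1 p.2 h).contDiffAt (hs.mem_nhds hbase)).of_le
          one_le_two).exists_lipschitzOnWith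
      exact ⟨K, t, ht, fun _ => hK⟩
    · exact ⟨0, Set.univ, Filter.univ_mem, fun h' => absurd h' h⟩
  choose Kf tf htf hKf using hLipEx
  set Kc : ℝ := (((Finset.univ : Finset (κ × Fin n)).sup Kf : NNReal) : ℝ) with hKcdef
  have hKc0 : 0 ≤ Kc := NNReal.coe_nonneg _
  have hKle : ∀ p : κ × Fin n, (Kf p : ℝ) ≤ Kc := fun p =>
    NNReal.coe_le_coe.2 (Finset.le_sup (Finset.mem_univ p))
  -- a neighborhood where all the Lipschitz estimates are available
  have hev : ∀ᶠ z in nhds (0 : Fin n → ℝ), ∀ p : κ × Fin n,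
      (z, Uk z) ∈ tf p ∧ (z, Ul z) ∈ tf p := by
    rw [Filter.eventually_all]
    intro p
    have h0k : tf p ∈ nhds ((0 : Fin n → ℝ), Uk 0) := by rw [hUk0]; exact htf p
    have h0l : tf p ∈ nhds ((0 : Fin n → ℝ), Ul 0) := by rw [hUl0]; exact htf p
    exact ((continuousAt_id.prodMk hUkc).eventually_mem h0k).and
      ((continuousAt_id.prodMk hUlc).eventually_mem h0l)
  obtain ⟨δ, hδ0, hδ⟩ := Metric.eventually_nhds_iff.1 hev
  obtain ⟨ρ, hρ0, hρ⟩ := Metric.isOpen_iff.1 hs0 0 h0s0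
  -- choice of the final radius
  obtain ⟨r, hr0, hrk, hrl, hrδ, hrρ, hrK⟩ :
      ∃ r : ℝ, 0 < r ∧ r < εk ∧ r < εℓ ∧ r < δ ∧ r < ρ ∧ (n : ℝ) * Kc * r < 1 := by
    have hc : (0 : ℝ) ≤ (n : ℝ) * Kc := mul_nonneg (Nat.cast_nonneg n) hKc0
    refine ⟨min (min (εk / 2) (εℓ / 2))
      (min (min (δ / 2) (ρ / 2)) (1 / ((n : ℝ) * Kc + 1))), ?_, ?_, ?_, ?_, ?_, ?_⟩
    · have h1 : (0:ℝ) < 1 / ((n : ℝ) * Kc + 1) := by positivity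
      positivity
    · exact lt_of_le_of_lt (le_trans (min_le_left _ _) (min_le_left _ _)) (by linarith)
    · exact lt_of_le_of_lt (le_trans (min_le_left _ _) (min_le_right _ _)) (by linarith)
    · exact lt_of_le_of_lt
        (le_trans (min_le_right _ _) (le_trans (min_le_left _ _) (min_le_left _ _)))
        (by linarith)
    · exact lt_of_le_of_lt
        (le_trans (min_le_right _ _) (le_trans (min_le_left _ _) (min_le_right _ _)))
        (by linarith)
    · have hr1 : min (min (εk / 2) (εℓ / 2))
          (min (min (δ / 2) (ρ / 2)) (1 / ((n : ℝ) * Kc + 1))) ≤ 1 / ((n : ℝ) * Kc + 1) :=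
        le_trans (min_le_right _ _) (min_le_right _ _)
      have h2 : (n : ℝ) * Kc * (1 / ((n : ℝ) * Kc + 1)) < 1 := by
        rw [mul_one_div, div_lt_one (by linarith)]
        linarith
      calc (n : ℝ) * Kc * _ ≤ (n : ℝ) * Kc * (1 / ((n : ℝ) * Kc + 1)) :=
            mul_le_mul_of_nonneg_left hr1 hc
        _ < 1 := h2
  have hE0 : 0 ≤ Kc * r := mul_nonneg hKc0 hr0.le
  -- the compact region
  set Cset : Set (Fin n → ℝ) := Metric.closedBall 0 r ∩ {x | x k = 0 ∧ x ℓ = 0} with hCsetdef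
  have hnorm_le : ∀ x ∈ Cset, ‖x‖ ≤ r := fun x hx => mem_closedBall_zero_iff.1 hx.1
  have hCk : ∀ x ∈ Cset, x ∈ Metric.ball (0 : Fin n → ℝ) εk := fun x hx =>
    mem_ball_zero_iff.2 (lt_of_le_of_lt (hnorm_le x hx) hrk)
  have hCl : ∀ x ∈ Cset, x ∈ Metric.ball (0 : Fin n → ℝ) εℓ := fun x hx =>
    mem_ball_zero_iff.2 (lt_of_le_of_lt (hnorm_le x hx) hrl)
  have hCδ : ∀ x ∈ Cset, ∀ p : κ × Fin n, (x, Uk x) ∈ tf p ∧ (x, Ul x) ∈ tf p := by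
    intro x hx
    exact hδ (by rw [dist_zero_right]; exact lt_of_le_of_lt (hnorm_le x hx) hrδ)
  have hCs0 : ∀ x ∈ Cset, x ∈ s0 := fun x hx =>
    hρ (mem_ball_zero_iff.2 (lt_of_le_of_lt (hnorm_le x hx) hrρ))
  have hCclosed : IsClosed {x : Fin n → ℝ | x k = 0 ∧ x ℓ = 0} := by
    have h1 : IsClosed {x : Fin n → ℝ | x k = 0} :=
      isClosed_eq (continuous_apply k) continuous_const
    have h2 : IsClosed {x : Fin n → ℝ | x ℓ = 0} :=
      isClosed_eq (continuous_apply ℓ) continuous_const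
    rw [show {x : Fin n → ℝ | x k = 0 ∧ x ℓ = 0}
        = {x : Fin n → ℝ | x k = 0} ∩ {x : Fin n → ℝ | x ℓ = 0} from rfl]
    exact h1.inter h2
  have hCcomp : IsCompact Cset := (isCompact_closedBall _ _).inter_right hCclosed
  have h0C : (0 : Fin n → ℝ) ∈ Cset := ⟨Metric.mem_closedBall_self hr0.le, rfl, rfl⟩
  -- maximum of the difference over the compact region
  have hUkcont : ContinuousOn Uk Cset := by
    rw [continuousOn_pi]
    intro m''
    simp only [hUkdef, darbouxUAux]
    by_cases h : k ∈ P m'' ∧ ℓ ∈ P m''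
    · simp only [if_pos h]
      exact ((hvk.2.1 m'' h.1 (hPne m'' h.1 h.2).1).continuousOn).mono
        (fun x hx => hCk x hx)
    · simp only [if_neg h]
      exact ((hubar m'').continuousOn).mono (fun x hx => hCs0 x hx)
  have hUlcont : ContinuousOn Ul Cset := by
    rw [continuousOn_pi]
    intro m''
    simp only [hUldef, darbouxUAux]
    by_cases h : k ∈ P m'' ∧ ℓ ∈ P m''
    · simp only [if_pos h]
      exact ((hvℓ.2.1 m'' h.2 (hPne m'' h.1 h.2).2).continuousOn).mono
        (fun x hx => hCl x hx)
    · simp only [if_neg h]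
      exact ((hubar m'').continuousOn).mono (fun x hx => hCs0 x hx)
  obtain ⟨x₀, hx₀C, hmax⟩ := hCcomp.exists_isMaxOn ⟨0, h0C⟩ ((hUkcont.sub hUlcont).norm)
  set D : ℝ := ‖Uk x₀ - Ul x₀‖ with hDdef
  have hD0 : 0 ≤ D := norm_nonneg _
  have hDle : ∀ z ∈ Cset, ‖Uk z - Ul z‖ ≤ D := fun z hz => hmax hz
  have hKD0 : 0 ≤ Kc * D := mul_nonneg hKc0 hD0
  have hKDr0 : 0 ≤ Kc * D * r := mul_nonneg hKD0 hr0.le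
  -- identification of the two right-hand sides on the subspace
  have hRHSk : ∀ x ∈ Cset, ∀ m', k ∈ P m' → ℓ ∈ P m' → ∀ i ∈ P m', i ≠ k → i ≠ ℓ →
      darbouxRestrictRHS n κ P F ubar k m' i x (fun m'' => vk m'' x) = F m' i x (Uk x) := by
    intro x hx m' hk' hl' i hi hik hil
    unfold darbouxRestrictRHS
    rw [hupd x k hx.2.1]
    refine hdep m' i hi x _ _ ?_
    intro m'' hsub
    have hk'' : k ∈ P m'' := hsub (Finset.mem_sdiff.2 ⟨hk', by simpa using Ne.symm hik⟩)
    have hl'' : ℓ ∈ P m'' := hsub (Finset.mem_sdiff.2 ⟨hl', by simpa using Ne.symm hil⟩)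
    simp only [darbouxSubst, hUkdef, darbouxUAux]
    rw [if_pos ⟨hk'', (hPne m'' hk'' hl'').1⟩, if_pos ⟨hk'', hl''⟩]
  have hRHSl : ∀ x ∈ Cset, ∀ m', k ∈ P m' → ℓ ∈ P m' → ∀ i ∈ P m', i ≠ k → i ≠ ℓ →
      darbouxRestrictRHS n κ P F ubar ℓ m' i x (fun m'' => vℓ m'' x) = F m' i x (Ul x) := by
    intro x hx m' hk' hl' i hi hik hil
    unfold darbouxRestrictRHS
    rw [hupd x ℓ hx.2.2]
    refine hdep m' i hi x _ _ ?_
    intro m'' hsub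
    have hk'' : k ∈ P m'' := hsub (Finset.mem_sdiff.2 ⟨hk', by simpa using Ne.symm hik⟩)
    have hl'' : ℓ ∈ P m'' := hsub (Finset.mem_sdiff.2 ⟨hl', by simpa using Ne.symm hil⟩)
    simp only [darbouxSubst, hUldef, darbouxUAux]
    rw [if_pos ⟨hl'', (hPne m'' hk'' hl'').2⟩, if_pos ⟨hk'', hl''⟩]
  -- the difference satisfies a common ODE in each admissible direction
  have hder : ∀ x ∈ Cset, ∀ m', k ∈ P m' → ℓ ∈ P m' → ∀ i ∈ P m', i ≠ k → i ≠ ℓ →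
      HasDerivAt (fun t => vk m' (Function.update x i t) - vℓ m' (Function.update x i t))
        (F m' i x (Uk x) - F m' i x (Ul x)) (x i) := by
    intro x hx m' hk' hl' i hi hik hil
    have h1 := (hvk.2.2 x (hCk x hx)).2.1 m' hk' (hPne m' hk' hl').1 i hi hik
    have h2 := (hvℓ.2.2 x (hCl x hx)).2.1 m' hl' (hPne m' hk' hl').2 i hi hil
    rw [hRHSk x hx m' hk' hl' i hi hik hil] at h1
    rw [hRHSl x hx m' hk' hl' i hi hik hil] at h2
    exact h1.sub h2
  -- Lipschitz bound on the difference of right-hand sides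
  have hbnd : ∀ x ∈ Cset, ∀ (m' : κ) (i : Fin n), i ∈ P m' →
      ‖F m' i x (Uk x) - F m' i x (Ul x)‖ ≤ Kc * D := by
    intro x hx m' i hi
    obtain ⟨h1, h2⟩ := hCδ x hx (m', i)
    have hl := (hKf (m', i) hi).dist_le_mul (x, Uk x) h1 (x, Ul x) h2
    rw [Prod.dist_eq] at hl
    simp only [dist_self] at hl
    rw [sup_eq_right.2 dist_nonneg] at hl
    have hdd : dist (Uk x) (Ul x) ≤ D := by rw [dist_eq_norm]; exact hDle x hx
    calc ‖F m' i x (Uk x) - F m' i x (Ul x)‖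
        = dist (F m' i x (Uk x)) (F m' i x (Ul x)) := (dist_eq_norm _ _).symm
      _ ≤ (Kf (m', i) : ℝ) * dist (Uk x) (Ul x) := hl
      _ ≤ Kc * D := mul_le_mul (hKle (m', i)) hdd dist_nonneg hKc0
  -- the region is stable under moving one admissible coordinate towards 0
  have hupdC : ∀ x ∈ Cset, ∀ i : Fin n, i ≠ k → i ≠ ℓ → ∀ t : ℝ, |t| ≤ |x i| →
      Function.update x i t ∈ Cset := by
    intro x hx i hik hil t ht
    refine ⟨mem_closedBall_zero_iff.2 ((pi_norm_le_iff_of_nonneg hr0.le).2 fun j => ?_),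
      ?_, ?_⟩
    · by_cases hj : j = i
      · subst hj
        rw [Function.update_self]
        calc ‖t‖ = |t| := Real.norm_eq_abs t
          _ ≤ |x j| := ht
          _ = ‖x j‖ := (Real.norm_eq_abs _).symm
          _ ≤ ‖x‖ := norm_le_pi_norm x j
          _ ≤ r := hnorm_le x hx
      · rw [Function.update_of_ne hj]
        exact le_trans (norm_le_pi_norm x j) (hnorm_le x hx)
    · rw [Function.update_of_ne (Ne.symm hik)]
      exact hx.2.1
    · rw [Function.update_of_ne (Ne.symm hil)]
      exact hx.2.2
  -- mean-value estimate along one coordinate segment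
  have hseg : ∀ x ∈ Cset, ∀ m', k ∈ P m' → ℓ ∈ P m' → ∀ i ∈ P m', i ≠ k → i ≠ ℓ →
      |(vk m' x - vℓ m' x)
        - (vk m' (Function.update x i 0) - vℓ m' (Function.update x i 0))| ≤ Kc * D * r := by
    intro x hx m' hk' hl' i hi hik hil
    have hxir : |x i| ≤ r := by
      calc |x i| = ‖x i‖ := (Real.norm_eq_abs _).symm
        _ ≤ ‖x‖ := norm_le_pi_norm x i
        _ ≤ r := hnorm_le x hx
    have hgder : ∀ t : ℝ, |t| ≤ |x i| →
        HasDerivAt (fun t' => vk m' (Function.update x i t') - vℓ m' (Function.update x i t'))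
          (F m' i (Function.update x i t) (Uk (Function.update x i t))
            - F m' i (Function.update x i t) (Ul (Function.update x i t))) t := by
      intro t ht
      have hyC := hupdC x hx i hik hil t ht
      have h := hder _ hyC m' hk' hl' i hi hik hil
      have hfun : (fun t' => vk m' (Function.update (Function.update x i t) i t')
          - vℓ m' (Function.update (Function.update x i t) i t'))
          = (fun t' => vk m' (Function.update x i t') - vℓ m' (Function.update x i t')) := by
        funext t'
        rw [Function.update_idem]
      rw [hfun, Function.update_self] at h
      exact h
    have hgbnd : ∀ t : ℝ, |t| ≤ |x i| →
        ‖F m' i (Function.update x i t) (Uk (Function.update x i t))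
          - F m' i (Function.update x i t) (Ul (Function.update x i t))‖ ≤ Kc * D :=
      fun t ht => hbnd _ (hupdC x hx i hik hil t ht) m' i hi
    have hx00 : Function.update x i (x i) = x := Function.update_eq_self i x
    rcases le_total 0 (x i) with hsign | hsign
    · have habs : ∀ t ∈ Set.Icc (0 : ℝ) (x i), |t| ≤ |x i| := by
        intro t htt
        rw [abs_of_nonneg htt.1, abs_of_nonneg hsign]
        exact htt.2
      have hmv := norm_image_sub_le_of_norm_deriv_le_segment'
        (f := fun t' => vk m' (Function.update x i t') - vℓ m' (Function.update x i t'))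
        (f' := fun t => F m' i (Function.update x i t) (Uk (Function.update x i t))
          - F m' i (Function.update x i t) (Ul (Function.update x i t)))
        (a := 0) (b := x i)
        (fun t htt => (hgder t (habs t htt)).hasDerivWithinAt)
        (fun t htt => hgbnd t (habs t ⟨htt.1, le_of_lt htt.2⟩))
        (x i) (Set.mem_Icc.2 ⟨hsign, le_refl _⟩)
      simp only [hx00] at hmv
      rw [Real.norm_eq_abs] at hmv
      have hxr : x i - 0 ≤ r := by
        rw [abs_of_nonneg hsign] at hxir
        linarith
      calc |(vk m' x - vℓ m' x)
            - (vk m' (Function.update x i 0) - vℓ m' (Function.update x i 0))|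
          ≤ Kc * D * (x i - 0) := hmv
        _ ≤ Kc * D * r := mul_le_mul_of_nonneg_left hxr hKD0
    · have habs : ∀ t ∈ Set.Icc (x i) (0 : ℝ), |t| ≤ |x i| := by
        intro t htt
        rw [abs_of_nonpos htt.2, abs_of_nonpos hsign]
        linarith [htt.1]
      have hmv := norm_image_sub_le_of_norm_deriv_le_segment'
        (f := fun t' => vk m' (Function.update x i t') - vℓ m' (Function.update x i t'))
        (f' := fun t => F m' i (Function.update x i t) (Uk (Function.update x i t))
          - F m' i (Function.update x i t) (Ul (Function.update x i t)))
        (a := x i) (b := 0)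
        (fun t htt => (hgder t (habs t htt)).hasDerivWithinAt)
        (fun t htt => hgbnd t (habs t ⟨htt.1, le_of_lt htt.2⟩))
        0 (Set.mem_Icc.2 ⟨hsign, le_refl _⟩)
      simp only [hx00] at hmv
      rw [Real.norm_eq_abs, abs_sub_comm] at hmv
      have hxr : 0 - x i ≤ r := by
        rw [abs_of_nonpos hsign] at hxir
        linarith
      calc |(vk m' x - vℓ m' x)
            - (vk m' (Function.update x i 0) - vℓ m' (Function.update x i 0))|
          ≤ Kc * D * (0 - x i) := hmv
        _ ≤ Kc * D * r := mul_le_mul_of_nonneg_left hxr hKD0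
  -- the key inductive estimate: zero out the admissible coordinates one by one
  have hmain : ∀ T : Finset (Fin n), ∀ m', k ∈ P m' → ℓ ∈ P m' → ∀ x ∈ Cset,
      (∀ i ∈ P m', i ≠ k → i ≠ ℓ → i ∉ T → x i = 0) →
      |vk m' x - vℓ m' x| ≤ T.card * (Kc * D * r) := by
    intro T
    induction T using Finset.induction_on with
    | empty =>
      intro m' hk' hl' x hx hcond
      have hzk : ∀ i ∈ P m', i ≠ k → x i = 0 := by
        intro i hi hik
        by_cases hil : i = ℓ
        · rw [hil]; exact hx.2.2
        · exact hcond i hi hik hil (Finset.notMem_empty i)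
      have hzl : ∀ i ∈ P m', i ≠ ℓ → x i = 0 := by
        intro i hi hil
        by_cases hik : i = k
        · rw [hik]; exact hx.2.1
        · exact hcond i hi hik hil (Finset.notMem_empty i)
      have h1 : vk m' x = ubar m' x := by
        have h := (hvk.2.2 x (hCk x hx)).2.2 m' hk' (hPne m' hk' hl').1 hzk
        rw [h, hupd x k hx.2.1]
      have h2 : vℓ m' x = ubar m' x := by
        have h := (hvℓ.2.2 x (hCl x hx)).2.2 m' hl' (hPne m' hk' hl').2 hzl
        rw [h, hupd x ℓ hx.2.2]
      rw [h1, h2, sub_self, abs_zero]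
      exact mul_nonneg (Nat.cast_nonneg _) hKDr0
    | @insert a T' ha IH =>
      intro m' hk' hl' x hx hcond
      by_cases hcase : a ∈ P m' ∧ a ≠ k ∧ a ≠ ℓ
      · obtain ⟨haP, hak, hal⟩ := hcase
        have hyC : Function.update x a 0 ∈ Cset :=
          hupdC x hx a hak hal 0 (by simp)
        have hycond : ∀ i ∈ P m', i ≠ k → i ≠ ℓ → i ∉ T' →
            Function.update x a 0 i = 0 := by
          intro i hi h1 h2 h3
          by_cases hia : i = a
          · rw [hia, Function.update_self]
          · rw [Function.update_of_ne hia]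
            exact hcond i hi h1 h2 (by simp [Finset.mem_insert, hia, h3])
        have hIH := IH m' hk' hl' _ hyC hycond
        have hsg := hseg x hx m' hk' hl' a haP hak hal
        have htri : |vk m' x - vℓ m' x| ≤
            |(vk m' x - vℓ m' x)
              - (vk m' (Function.update x a 0) - vℓ m' (Function.update x a 0))|
            + |vk m' (Function.update x a 0) - vℓ m' (Function.update x a 0)| := by
          have h := abs_add_le
            ((vk m' x - vℓ m' x)
              - (vk m' (Function.update x a 0) - vℓ m' (Function.update x a 0)))
            (vk m' (Function.update x a 0) - vℓ m' (Function.update x a 0))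
          have heq : (vk m' x - vℓ m' x)
              - (vk m' (Function.update x a 0) - vℓ m' (Function.update x a 0))
              + (vk m' (Function.update x a 0) - vℓ m' (Function.update x a 0))
              = vk m' x - vℓ m' x := by ring
          rwa [heq] at h
        calc |vk m' x - vℓ m' x|
            ≤ |(vk m' x - vℓ m' x)
                - (vk m' (Function.update x a 0) - vℓ m' (Function.update x a 0))|
              + |vk m' (Function.update x a 0) - vℓ m' (Function.update x a 0)| := htri
          _ ≤ Kc * D * r + T'.card * (Kc * D * r) := add_le_add hsg hIH
          _ = (insert a T').card * (Kc * D * r) := by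
              rw [Finset.card_insert_of_notMem ha]
              push_cast
              ring
      · push_neg at hcase
        have hcond' : ∀ i ∈ P m', i ≠ k → i ≠ ℓ → i ∉ T' → x i = 0 := by
          intro i hi h1 h2 h3
          by_cases hia : i = a
          · exact absurd (hcase (hia ▸ hi) (hia ▸ h1)) (hia ▸ h2)
          · exact hcond i hi h1 h2 (by simp [Finset.mem_insert, hia, h3])
        refine le_trans (IH m' hk' hl' x hx hcond') ?_
        have hcard : (T'.card : ℝ) ≤ ((insert a T').card : ℝ) := by
          exact_mod_cast Finset.card_le_card (Finset.subset_insert a T')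
        exact mul_le_mul_of_nonneg_right hcard hKDr0
  -- self-improving bound on the maximum, hence it vanishes
  have hDn : D ≤ (n : ℝ) * (Kc * D * r) := by
    refine (pi_norm_le_iff_of_nonneg
      (mul_nonneg (Nat.cast_nonneg n) hKDr0)).2 fun m'' => ?_
    by_cases h : k ∈ P m'' ∧ ℓ ∈ P m''
    · have hm := hmain (P m'') m'' h.1 h.2 x₀ hx₀C (fun i hi _ _ hnot => absurd hi hnot)
      have hval : (Uk x₀ - Ul x₀) m'' = vk m'' x₀ - vℓ m'' x₀ := by
        simp [hUkdef, hUldef, darbouxUAux, h.1, h.2]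
      rw [hval, Real.norm_eq_abs]
      refine le_trans hm ?_
      have hcard : ((P m'').card : ℝ) ≤ (n : ℝ) := by
        calc ((P m'').card : ℝ) ≤ (Fintype.card (Fin n) : ℝ) := by
              exact_mod_cast Finset.card_le_univ _
          _ = (n : ℝ) := by simp
      exact mul_le_mul_of_nonneg_right hcard hKDr0
    · have hval : (Uk x₀ - Ul x₀) m'' = 0 := by
        simp [hUkdef, hUldef, darbouxUAux, h]
      rw [hval, norm_zero]
      exact mul_nonneg (Nat.cast_nonneg n) hKDr0
  have hD00 : D = 0 := by
    by_contra hne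
    have hDpos : 0 < D := lt_of_le_of_ne hD0 (Ne.symm hne)
    have h1 : (n : ℝ) * (Kc * D * r) = ((n : ℝ) * Kc * r) * D := by ring
    rw [h1] at hDn
    have h2 : ((n : ℝ) * Kc * r) * D < 1 * D := mul_lt_mul_of_pos_right hrK hDpos
    rw [one_mul] at h2
    linarith
  -- conclusion
  refine ⟨r, hr0, ?_⟩
  intro x hx hxk hxl
  have hxC : x ∈ Cset := ⟨Metric.ball_subset_closedBall hx, hxk, hxl⟩
  have h := hDle x hxC
  rw [hD00] at h
  have hcomp : ‖(Uk x - Ul x) m‖ ≤ 0 := le_trans (norm_le_pi_norm _ m) h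
  have hval : (Uk x - Ul x) m = vk m x - vℓ m x := by
    simp [hUkdef, hUldef, darbouxUAux, hkm, hℓm]
  rw [hval] at hcomp
  exact sub_eq_zero.1 (norm_le_zero_iff.1 hcomp)
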